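/- arXiv:1201.5817 — 5 statements merged into one kernel-verified Lean document; each statement's English description precedes it below -/
import Mathlib

section
/- Let a, b, c, d be integers, let γ = ⟨a, b, c, d⟩ be the Lipschitz integer γ = z + wj where z = a + bi and w = c + di are Gaussian integers, and suppose γ is odd, i.e. Quaternion.normSq γ = a² + b² + c² + d² is odd. Then the right ideal of the Lipschitz integers generated by iγ and γ is the whole ring if and only if z and w are coprime in ℤ[i]; that is, (∃ x y : Quaternion ℤ, (i * γ) * x + γ * y = 1) ↔ IsCoprime (⟨a, b⟩ : GaussianInt) (⟨c, d⟩ : GaussianInt). -/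
/-!
Write a Lipschitz integer as `z + w j` with Gaussian integers `z, w`, so that
`(z + w j)(u + v j) = (z u - w v̄) + (z v + w ū) j`. The Gaussian part of `iγx + γy = 1` then
reads `z (i x_z + y_z) - w (i x̄_w + ȳ_w) = 1`. Conversely, if `z s + w t = 1`, then
`p = γ (s - t̄ j)` has Gaussian part `1`, so `i p i - p = -2` lies in the right ideal, and so does
`γ γ̄ = N(γ)`; since `N(γ)` is odd, the ideal contains `1`.
-/

namespace Quaternion

section UnitI

variable {R : Type*} [CommRing R]

def unitI (R : Type*) [CommRing R] : Quaternion R := ⟨0, 1, 0, 0⟩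

@[simp] lemma re_unitI : (unitI R).re = 0 := rfl
@[simp] lemma imI_unitI : (unitI R).imI = 1 := rfl
@[simp] lemma imJ_unitI : (unitI R).imJ = 0 := rfl
@[simp] lemma imK_unitI : (unitI R).imK = 0 := rfl

lemma unitI_mul_mul_unitI_sub_self {p : Quaternion R} (hre : p.re = 1) (himI : p.imI = 0) :
    unitI R * p * unitI R - p = ((-2 : R) : Quaternion R) := by
  ext <;> simp only [re_sub, imI_sub, imJ_sub, imK_sub, re_mul, imI_mul, imJ_mul, imK_mul,
    re_coe, imI_coe, imJ_coe, imK_coe, re_unitI, imI_unitI, imJ_unitI, imK_unitI, hre, himI] <;>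
    ring

end UnitI

/-- The Gaussian integer `z` in `p = z + w j`. -/
def gaussPart (p : Quaternion ℤ) : GaussianInt := ⟨p.re, p.imI⟩

/-- The Gaussian integer `w` in `p = z + w j`. -/
def jPart (p : Quaternion ℤ) : GaussianInt := ⟨p.imJ, p.imK⟩

def ofGaussian (z w : GaussianInt) : Quaternion ℤ := ⟨z.re, z.im, w.re, w.im⟩

@[simp] lemma gaussPart_ofGaussian (z w : GaussianInt) : gaussPart (ofGaussian z w) = z := rfl
@[simp] lemma jPart_ofGaussian (z w : GaussianInt) : jPart (ofGaussian z w) = w := rfl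

@[simp] lemma gaussPart_unitI : gaussPart (unitI ℤ) = ⟨0, 1⟩ := rfl
@[simp] lemma jPart_unitI : jPart (unitI ℤ) = 0 := rfl

lemma gaussPart_one : gaussPart 1 = 1 := rfl

lemma gaussPart_add (p q : Quaternion ℤ) : gaussPart (p + q) = gaussPart p + gaussPart q := rfl

lemma gaussPart_mul (p q : Quaternion ℤ) :
    gaussPart (p * q) = gaussPart p * gaussPart q - jPart p * star (jPart q) := by
  ext <;> simp [gaussPart, jPart] <;> ring

lemma jPart_mul (p q : Quaternion ℤ) :
    jPart (p * q) = gaussPart p * jPart q + jPart p * star (gaussPart q) := by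
  ext <;> simp [gaussPart, jPart] <;> ring

lemma isCoprime_gaussPart_jPart_of_unitI_mul_add_eq_one {γ x y : Quaternion ℤ}
    (h : unitI ℤ * γ * x + γ * y = 1) : IsCoprime (gaussPart γ) (jPart γ) := by
  have hgauss := congrArg gaussPart h
  simp only [gaussPart_add, gaussPart_mul, jPart_mul, gaussPart_unitI, jPart_unitI,
    gaussPart_one] at hgauss
  exact ⟨⟨0, 1⟩ * gaussPart x + gaussPart y, -(⟨0, 1⟩ * star (jPart x) + star (jPart y)),
    by linear_combination hgauss⟩

lemma exists_unitI_mul_add_eq_one_of_isCoprime {γ : Quaternion ℤ} (hodd : Odd (normSq γ))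
    (h : IsCoprime (gaussPart γ) (jPart γ)) :
    ∃ x y : Quaternion ℤ, unitI ℤ * γ * x + γ * y = 1 := by
  obtain ⟨s, t, hst⟩ := h
  obtain ⟨m, hm⟩ := hodd
  set q := ofGaussian s (-star t)
  have hp : gaussPart (γ * q) = 1 := by
    rw [gaussPart_mul, gaussPart_ofGaussian, jPart_ofGaussian, star_neg, star_star]
    linear_combination hst
  have hcore : unitI ℤ * (γ * q) * unitI ℤ - γ * q = ((-2 : ℤ) : Quaternion ℤ) :=
    unitI_mul_mul_unitI_sub_self (congrArg Zsqrtd.re hp) (congrArg Zsqrtd.im hp)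
  refine ⟨q * unitI ℤ * m, star γ - q * m, ?_⟩
  calc unitI ℤ * γ * (q * unitI ℤ * m) + γ * (star γ - q * m)
      = (unitI ℤ * (γ * q) * unitI ℤ - γ * q) * m + γ * star γ := by noncomm_ring
    _ = ((-2 * m + (2 * m + 1) : ℤ) : Quaternion ℤ) := by
      rw [hcore, self_mul_star, hm]; push_cast; rfl
    _ = 1 := by norm_num

end Quaternion

theorem right_ideal_igamma_gamma_eq_top_iff_coprime (a b c d : ℤ)
    (γ i : Quaternion ℤ) (hγ : γ = ⟨a, b, c, d⟩) (hi : i = ⟨0, 1, 0, 0⟩)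
    (hodd : Odd (Quaternion.normSq γ)) :
    (∃ x y : Quaternion ℤ, (i * γ) * x + γ * y = 1) ↔
      IsCoprime (⟨a, b⟩ : GaussianInt) (⟨c, d⟩ : GaussianInt) := by
  subst hγ hi
  constructor
  · rintro ⟨x, y, h⟩
    exact Quaternion.isCoprime_gaussPart_jPart_of_unitI_mul_add_eq_one h
  · exact Quaternion.exists_unitI_mul_add_eq_one_of_isCoprime hodd
end

section
/- Let n be a natural number and let u, v : Fin n → (Fin (n+1) → ℝ) be two families of n vectors in ℝ^{n+1}. Define their vector products c, d : Fin (n+1) → ℝ by letting c m (resp. d m) be the determinant of the (n+1)×(n+1) matrix whose first n rows are u 0, …, u (n-1) (resp. v 0, …, v (n-1)) and whose last row is the standard basis vector e_m (Pi.single m 1). Then c ⬝ᵥ d equals the determinant of the n×n matrix whose (i, j) entry is u i ⬝ᵥ v j. -/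
/-!
Write `d` for the vector product of the `vⱼ`. The determinant with rows `u₁, …, uₙ, w` is
`c ⬝ᵥ w` by linearity in the last row, and `d ⬝ᵥ vⱼ = 0` since it is a determinant with a
repeated row. Hence `det [u; d] * det [v; d] = det ([u; d] * [v; d]ᵀ)`; the left side is
`(c ⬝ᵥ d) * (d ⬝ᵥ d)` and the right side is `(d ⬝ᵥ d) * det (uᵢ ⬝ᵥ vⱼ)`, because the last row of the
product is `(0, …, 0, d ⬝ᵥ d)`. If `d ≠ 0` we cancel `d ⬝ᵥ d`. If `d = 0`, the `vⱼ` are dependent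
(independent ones extend to an invertible matrix, whose determinant would be `d ⬝ᵥ w ≠ 0`), so
`(uᵢ ⬝ᵥ vⱼ)` kills a nonzero vector and its determinant vanishes.
-/

open Matrix

section

variable {R : Type*} [CommRing R] {n : ℕ}

def vectorProduct (v : Fin n → Fin (n + 1) → R) : Fin (n + 1) → R :=
  fun m => (of (Fin.snoc v (Pi.single m 1))).det

theorem det_of_snoc_eq_vectorProduct_dotProduct (v : Fin n → Fin (n + 1) → R)
    (w : Fin (n + 1) → R) :
    (of (Fin.snoc v w)).det = vectorProduct v ⬝ᵥ w := by
  let lastRow : (Fin (n + 1) → R) →ₗ[R] R :=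
    (detRowAlternating : (Fin (n + 1) → R) [⋀^Fin (n + 1)]→ₗ[R] R).toMultilinearMap.toLinearMap
      (Fin.snoc v 0) (Fin.last n)
  have lastRow_apply : ∀ w, lastRow w = (of (Fin.snoc v w)).det := fun w => by
    simp only [lastRow, MultilinearMap.toLinearMap_apply, AlternatingMap.coe_multilinearMap,
      Fin.update_snoc_last]
    rfl
  rw [← lastRow_apply, lastRow.pi_apply_eq_sum_univ, dotProduct]
  refine Finset.sum_congr rfl fun m _ => ?_
  rw [lastRow_apply, smul_eq_mul, mul_comm, vectorProduct]
  congr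
  ext j
  simp [Pi.single_apply, eq_comm]

theorem vectorProduct_dotProduct_eq_zero (v : Fin n → Fin (n + 1) → R) (j : Fin n) :
    vectorProduct v ⬝ᵥ v j = 0 := by
  rw [← det_of_snoc_eq_vectorProduct_dotProduct]
  exact det_zero_of_row_eq (Fin.castSucc_lt_last j).ne (by ext; simp)

theorem of_mul_transpose_of {m k ι : Type*} [Fintype ι] (a : m → ι → R) (b : k → ι → R) :
    of a * (of b)ᵀ = of fun i j => a i ⬝ᵥ b j :=
  rfl

theorem det_eq_mul_det_submatrix_castSucc (A : Matrix (Fin (n + 1)) (Fin (n + 1)) R)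
    (h : ∀ j : Fin n, A (Fin.last n) j.castSucc = 0) :
    A.det = A (Fin.last n) (Fin.last n) * (A.submatrix Fin.castSucc Fin.castSucc).det := by
  rw [det_succ_row A (Fin.last n), Fin.sum_univ_castSucc]
  simp [h, Fin.succAbove_last]

theorem vectorProduct_dotProduct_mul_self (u v : Fin n → Fin (n + 1) → R) :
    (vectorProduct u ⬝ᵥ vectorProduct v) * (vectorProduct v ⬝ᵥ vectorProduct v) =
      (vectorProduct v ⬝ᵥ vectorProduct v) * (of fun i j => u i ⬝ᵥ v j).det := by
  set d := vectorProduct v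
  calc (vectorProduct u ⬝ᵥ d) * (d ⬝ᵥ d)
      = (of (Fin.snoc u d) * (of (Fin.snoc v d))ᵀ).det := by
        rw [det_mul, det_transpose, det_of_snoc_eq_vectorProduct_dotProduct,
          det_of_snoc_eq_vectorProduct_dotProduct]
    _ = (d ⬝ᵥ d) * (of fun i j => u i ⬝ᵥ v j).det := by
        rw [of_mul_transpose_of, det_eq_mul_det_submatrix_castSucc]
        · congr 2
          · simp
          · ext i j
            simp
        · intro j
          simpa [dotProduct_comm (v j)] using vectorProduct_dotProduct_eq_zero v j

end

theorem vectorProduct_ne_zero_of_linearIndependent {K : Type*} [Field K] {n : ℕ}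
    {v : Fin n → Fin (n + 1) → K} (hv : LinearIndependent K v) : vectorProduct v ≠ 0 := by
  obtain ⟨w, hw⟩ := exists_linearIndependent_snoc_of_lt_finrank hv (by simp)
  have hdet : (of (Fin.snoc v w)).det ≠ 0 :=
    ((isUnit_iff_isUnit_det _).mp (linearIndependent_rows_iff_isUnit.mp hw)).ne_zero
  rw [det_of_snoc_eq_vectorProduct_dotProduct] at hdet
  exact fun h => hdet (by rw [h, zero_dotProduct])

theorem det_of_dotProduct_eq_zero_of_not_linearIndependent {A m ι : Type*} [CommRing A]
    [IsDomain A] [Fintype m] [DecidableEq m] [Fintype ι] (u : m → ι → A) {v : m → ι → A}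
    (hv : ¬LinearIndependent A v) : (of fun i j => u i ⬝ᵥ v j).det = 0 := by
  obtain ⟨g, hg, j, hgj⟩ := Fintype.not_linearIndependent_iff.mp hv
  refine exists_mulVec_eq_zero_iff.mp ⟨g, fun h => hgj (congrFun h j), ?_⟩
  rw [← of_mul_transpose_of, ← mulVec_mulVec, mulVec_transpose, vecMul_eq_sum]
  exact (congrArg _ hg).trans (mulVec_zero _)

theorem vectorProduct_dotProduct_vectorProduct (n : ℕ)
    (u v : Fin n → (Fin (n+1) → ℝ)) (c d : Fin (n+1) → ℝ)
    (hc : ∀ m : Fin (n+1), c m = (Matrix.of (Fin.snoc u (Pi.single m 1))).det)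
    (hd : ∀ m : Fin (n+1), d m = (Matrix.of (Fin.snoc v (Pi.single m 1))).det) :
    c ⬝ᵥ d = (Matrix.of (fun i j : Fin n => u i ⬝ᵥ v j)).det := by
  obtain rfl : c = vectorProduct u := funext hc
  obtain rfl : d = vectorProduct v := funext hd
  by_cases hv : vectorProduct v = 0
  · rw [hv, dotProduct_zero, eq_comm]
    exact det_of_dotProduct_eq_zero_of_not_linearIndependent u
      (mt vectorProduct_ne_zero_of_linearIndependent (not_not.mpr hv))
  · exact mul_right_cancel₀ (dotProduct_self_eq_zero.not.mpr hv)
      ((vectorProduct_dotProduct_mul_self u v).trans (mul_comm _ _))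
end

section
/- Let α, β, γ be Lipschitz integers with β orthogonal to α and γ orthogonal to α, i.e. (β * star α).re = 0 and (γ * star α).re = 0, and let δ be their vector product, i.e. a Lipschitz integer such that for every x : Quaternion ℤ, (δ * star x).re equals the determinant of the 4×4 integer matrix whose rows are the coordinate vectors ![re, imI, imJ, imK] of α, β, γ, x, in this order. Then N(α) divides N(δ) in ℤ, i.e. Quaternion.normSq α ∣ Quaternion.normSq δ. -/
/-!
With `M` the integer matrix with rows `α, β, γ, δ`, the defining property of `δ` gives
`N(δ) = det M`, and `δ` is orthogonal to `α`, `β`, `γ` because a determinant with a repeated row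
vanishes. Hence `N(δ)² = det (M Mᵀ)` is the Gram determinant of `α, β, γ, δ`, which the
orthogonality relations make block diagonal: it equals `N(α) (N(β) N(γ) - (β·γ)²) N(δ)`.
Cancelling `N(δ)` (or noting `N(δ) = 0`) gives `N(α) ∣ N(δ)`.
-/

/-- The coordinate vector of a Lipschitz integer. -/
def coords (q : Quaternion ℤ) : Fin 4 → ℤ := ![q.re, q.imI, q.imJ, q.imK]

open Matrix Quaternion

section CommRing

variable {R : Type*} [CommRing R]

theorem Quaternion.re_mul_star_comm (p q : ℍ[R]) : (p * star q).re = (q * star p).re := by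
  rw [← Quaternion.re_star (p * star q), StarMul.star_mul, star_star]

theorem Quaternion.re_mul_star_self (q : ℍ[R]) : (q * star q).re = normSq q := by
  rw [self_mul_star, re_coe]

theorem Matrix.det_fin_four_of_blocks_one_two_one (a b c d e f : R) :
    !![a, 0, 0, 0; 0, b, c, 0; 0, d, e, 0; 0, 0, 0, f].det = a * (b * e - c * d) * f := by
  simp [det_succ_row_zero, Fin.sum_univ_succ]
  ring

theorem det_gram_of_orthogonal (α β γ δ : ℍ[R]) (hβ : (β * star α).re = 0)
    (hγ : (γ * star α).re = 0) (hδα : (δ * star α).re = 0) (hδβ : (δ * star β).re = 0)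
    (hδγ : (δ * star γ).re = 0) :
    (of fun i j => (![α, β, γ, δ] i * star (![α, β, γ, δ] j)).re).det =
      normSq α * (normSq β * normSq γ - (β * star γ).re ^ 2) * normSq δ := by
  have hαβ := (re_mul_star_comm α β).trans hβ
  have hαγ := (re_mul_star_comm α γ).trans hγ
  have hαδ := (re_mul_star_comm α δ).trans hδα
  have hβδ := (re_mul_star_comm β δ).trans hδβ
  have hγδ := (re_mul_star_comm γ δ).trans hδγ
  have hgram : (of fun i j => (![α, β, γ, δ] i * star (![α, β, γ, δ] j)).re) =
      !![normSq α, 0, 0, 0; 0, normSq β, (β * star γ).re, 0;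
        0, (β * star γ).re, normSq γ, 0; 0, 0, 0, normSq δ] := by
    ext i j
    fin_cases i <;> fin_cases j <;>
      simp [-re_mul, re_mul_star_self, re_mul_star_comm γ β, *]
  rw [hgram, det_fin_four_of_blocks_one_two_one, sq]

end CommRing

theorem dotProduct_coords (p q : ℍ[ℤ]) : coords p ⬝ᵥ coords q = (p * star q).re := by
  simp [coords, dotProduct, Fin.sum_univ_four, re_mul]

theorem det_of_coords_sq (q : Fin 4 → ℍ[ℤ]) :
    (of fun i => coords (q i)).det ^ 2 = (of fun i j => (q i * star (q j)).re).det := by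
  rw [sq]
  nth_rewrite 2 [← det_transpose]
  rw [← det_mul]
  congr 1
  ext i j
  exact dotProduct_coords (q i) (q j)

theorem normSq_dvd_normSq_vectorProduct (α β γ δ : Quaternion ℤ)
    (hβ : (β * star α).re = 0) (hγ : (γ * star α).re = 0)
    (hδ : ∀ x : Quaternion ℤ,
      (δ * star x).re = (Matrix.of ![coords α, coords β, coords γ, coords x]).det) :
    Quaternion.normSq α ∣ Quaternion.normSq δ := by
  have hδα : (δ * star α).re = 0 := by
    rw [hδ]; exact det_zero_of_row_eq (i := 0) (j := 3) (by decide) rfl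
  have hδβ : (δ * star β).re = 0 := by
    rw [hδ]; exact det_zero_of_row_eq (i := 1) (j := 3) (by decide) rfl
  have hδγ : (δ * star γ).re = 0 := by
    rw [hδ]; exact det_zero_of_row_eq (i := 2) (j := 3) (by decide) rfl
  have hrows : Matrix.of ![coords α, coords β, coords γ, coords δ] =
      of fun i => coords (![α, β, γ, δ] i) := by
    ext i j; fin_cases i <;> rfl
  have key : normSq δ * normSq δ =
      normSq α * (normSq β * normSq γ - (β * star γ).re ^ 2) * normSq δ := by
    rw [← sq, ← det_gram_of_orthogonal α β γ δ hβ hγ hδα hδβ hδγ, ← det_of_coords_sq, ← hrows,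
      ← hδ, re_mul_star_self]
  rcases eq_or_ne (normSq δ) 0 with h0 | hne
  · simp [h0]
  · exact ⟨_, mul_right_cancel₀ hne key⟩
end

section
/- Let a, b, c, d be integers with gcd(gcd(a,b), gcd(c,d)) = 1 (α = ⟨a,b,c,d⟩ is primitive), let g₁ = gcd(a,b) ≠ 0 and g₂ = gcd(c,d) ≠ 0, write a = g₁·a', b = g₁·b', c = g₂·c', d = g₂·d' with a', b', c', d' integers, and let x₀, y₀, z₀, t₀ be integers with a·x₀ + b·y₀ = g₁ and c·z₀ + d·t₀ = g₂. Set β₁ = ⟨g₂·x₀, g₂·y₀, −g₁·z₀, −g₁·t₀⟩, β₂ = ⟨b', −a', 0, 0⟩, β₃ = ⟨0, 0, d', −c'⟩ in Quaternion ℤ. Then for every Lipschitz integer γ, γ is orthogonal to α (i.e. (γ * star α).re = 0) if and only if there exist integers r, s, u with γ = r•β₁ + s•β₂ + u•β₃. (That is, the ℤ-module α^⊥ ∩ 𝓛 is generated by β₁ = g₂(x₀ + y₀ i) − g₁(z₀ + t₀ i)j, β₂ = (1/g₁)(b − a i), β₃ = (1/g₂)(d − c i)j.) -/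
/-!
Writing `γ = ⟨p, q, m, n⟩`, orthogonality to `α` reads `g₁ (p a' + q b') + g₂ (m c' + n d') = 0`.
Since `g₁` and `g₂` are coprime, this holds exactly when `p a' + q b' = r g₂` and
`m c' + n d' = -r g₁` for some integer `r`. As `a' x₀ + b' y₀ = 1`, the vectors `(x₀, y₀)` and
`(b', -a')` form a basis of `ℤ²`, in which `(p, q)` has coordinates `(p a' + q b', y₀ p - x₀ q)`;
likewise `(z₀, t₀)`, `(d', -c')` in the `(j, k)`-plane. Hence `γ = r β₁ + s β₂ + u β₃`.
-/

theorem Quaternion.re_mul_star {R : Type*} [CommRing R] (x y : Quaternion R) :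
    (x * star y).re = x.re * y.re + x.imI * y.imI + x.imJ * y.imJ + x.imK * y.imK := by
  simp only [Quaternion.re_mul, Quaternion.re_star, Quaternion.imI_star, Quaternion.imJ_star,
    Quaternion.imK_star]
  ring

section CommRing

variable {R : Type*} [CommRing R]

theorem IsCoprime.exists_eq_mul_of_mul_add_mul_eq_zero {g₁ g₂ X Y : R} (h : IsCoprime g₁ g₂)
    (hXY : g₁ * X + g₂ * Y = 0) : ∃ r, X = r * g₂ ∧ Y = -(r * g₁) := by
  obtain ⟨u, v, huv⟩ := h
  refine ⟨v * X - u * Y, ?_, ?_⟩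
  · linear_combination (-X) * huv + u * hXY
  · linear_combination (-Y) * huv + v * hXY

theorem eq_mul_add_mul_of_mul_add_mul_eq_one {a b x y : R} (h : a * x + b * y = 1) (p q : R) :
    p = (p * a + q * b) * x + (y * p - x * q) * b ∧
      q = (p * a + q * b) * y + (y * p - x * q) * -a := by
  constructor
  · linear_combination (-p) * h
  · linear_combination (-q) * h

theorem mul_add_mul_eq_one_of_eq_mul [IsDomain R] {g a b a' b' x y : R} (hg : g ≠ 0)
    (ha : a = g * a') (hb : b = g * b') (h : a * x + b * y = g) : a' * x + b' * y = 1 :=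
  mul_left_cancel₀ hg (by linear_combination h - x * ha - y * hb)

end CommRing

theorem orthogonal_complement_generators (a b c d g₁ g₂ a' b' c' d' x₀ y₀ z₀ t₀ : ℤ)
    (hprim : Int.gcd (Int.gcd a b) (Int.gcd c d) = 1)
    (hg₁ : g₁ = Int.gcd a b) (hg₂ : g₂ = Int.gcd c d)
    (hg₁0 : g₁ ≠ 0) (hg₂0 : g₂ ≠ 0)
    (ha : a = g₁ * a') (hb : b = g₁ * b') (hc : c = g₂ * c') (hd : d = g₂ * d')
    (hx : a * x₀ + b * y₀ = g₁) (hz : c * z₀ + d * t₀ = g₂)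
    (α β₁ β₂ β₃ : Quaternion ℤ)
    (hα : α = ⟨a, b, c, d⟩)
    (hβ₁ : β₁ = ⟨g₂ * x₀, g₂ * y₀, -(g₁ * z₀), -(g₁ * t₀)⟩)
    (hβ₂ : β₂ = ⟨b', -a', 0, 0⟩)
    (hβ₃ : β₃ = ⟨0, 0, d', -c'⟩) :
    ∀ γ : Quaternion ℤ,
      (γ * star α).re = 0 ↔ ∃ r s u : ℤ, γ = r • β₁ + s • β₂ + u • β₃ := by
  intro γ
  have hab := mul_add_mul_eq_one_of_eq_mul hg₁0 ha hb hx
  have hcd := mul_add_mul_eq_one_of_eq_mul hg₂0 hc hd hz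
  have hcop : IsCoprime g₁ g₂ := by
    rw [Int.isCoprime_iff_gcd_eq_one, hg₁, hg₂]
    simpa using hprim
  simp only [Quaternion.re_mul_star, Quaternion.ext_iff, Quaternion.re_add, Quaternion.imI_add,
    Quaternion.imJ_add, Quaternion.imK_add, Quaternion.re_smul, Quaternion.imI_smul,
    Quaternion.imJ_smul, Quaternion.imK_smul, smul_eq_mul]
  subst hα hβ₁ hβ₂ hβ₃ ha hb hc hd
  dsimp only
  constructor
  · intro h
    have horth : g₁ * (γ.re * a' + γ.imI * b') + g₂ * (γ.imJ * c' + γ.imK * d') = 0 := by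
      linear_combination h
    obtain ⟨r, hr₁, hr₂⟩ := hcop.exists_eq_mul_of_mul_add_mul_eq_zero horth
    obtain ⟨hre, himI⟩ := eq_mul_add_mul_of_mul_add_mul_eq_one hab γ.re γ.imI
    obtain ⟨himJ, himK⟩ := eq_mul_add_mul_of_mul_add_mul_eq_one hcd γ.imJ γ.imK
    refine ⟨r, y₀ * γ.re - x₀ * γ.imI, t₀ * γ.imJ - z₀ * γ.imK, ?_, ?_, ?_, ?_⟩
    · linear_combination hre + x₀ * hr₁
    · linear_combination himI + y₀ * hr₁
    · linear_combination himJ + z₀ * hr₂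
    · linear_combination himK + t₀ * hr₂
  · rintro ⟨r, s, u, hre, himI, himJ, himK⟩
    linear_combination (g₁ * a') * hre + (g₁ * b') * himI + (g₂ * c') * himJ + (g₂ * d') * himK
      + (r * g₂) * hx - (r * g₁) * hz
end

section
/- Let α, β, γ be Lipschitz integers with β orthogonal to α and γ orthogonal to α, i.e. (β * star α).re = 0 and (γ * star α).re = 0, and let δ be their vector product, i.e. a Lipschitz integer such that for every x : Quaternion ℤ, (δ * star x).re equals the determinant of the 4×4 integer matrix whose rows are the coordinate vectors ![re, imI, imJ, imK] of α, β, γ, x, in this order. Then δ is both a right and a left multiple of α: there exist Lipschitz integers λ and μ with δ = α * λ and δ = μ * α. -/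
namespace Quaternion

variable {R : Type*} [CommRing R]

theorem re_mul_star_eq_dotProduct (p x : ℍ[R]) :
    (p * star x).re = equivTuple R p ⬝ᵥ equivTuple R x := by
  simp [dotProduct, Fin.sum_univ_four]

theorem ext_re_mul_star {p q : ℍ[R]} (h : ∀ x : ℍ[R], (p * star x).re = (q * star x).re) :
    p = q := by
  refine (equivTuple R).injective (dotProduct_eq _ _ fun v => ?_)
  simpa only [re_mul_star_eq_dotProduct, Equiv.apply_symm_apply] using h ((equivTuple R).symm v)

def vectorProduct (α β γ : ℍ[R]) : ℍ[R] :=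
  α * (star γ * β).im - (γ * star α).re • β + (β * star α).re • γ

theorem re_vectorProduct_mul_star (α β γ x : ℍ[R]) :
    (vectorProduct α β γ * star x).re =
      (Matrix.of ![equivTuple R α, equivTuple R β, equivTuple R γ, equivTuple R x]).det := by
  rw [Matrix.det_succ_row_zero]
  simp [vectorProduct, Fin.sum_univ_succ, Matrix.det_fin_three, Fin.succAbove]
  ring

theorem vectorProduct_eq_im_mul (α β γ : ℍ[R]) :
    vectorProduct α β γ = (γ * star β).im * α + (γ * star α).re • β - (β * star α).re • γ := by
  ext <;>
  simp only [vectorProduct, re_mul, re_star, imI_star, imJ_star, imK_star, re_add, re_sub,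
    re_smul, imI_add, imI_sub, imI_smul, imJ_add, imJ_sub, imJ_smul, imK_add, imK_sub, imK_smul,
    re_im, imI_im, imJ_im, imK_im, imI_mul, imJ_mul, imK_mul, smul_eq_mul] <;> ring

end Quaternion

theorem vectorProduct_mem_left_and_right_multiples (α β γ δ : Quaternion ℤ)
    (hβ : (β * star α).re = 0) (hγ : (γ * star α).re = 0)
    (hδ : ∀ x : Quaternion ℤ,
      (δ * star x).re = (Matrix.of ![coords α, coords β, coords γ, coords x]).det) :
    (∃ l : Quaternion ℤ, δ = α * l) ∧ (∃ μ : Quaternion ℤ, δ = μ * α) := by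
  have hδ_eq : δ = Quaternion.vectorProduct α β γ := Quaternion.ext_re_mul_star fun x =>
    (hδ x).trans (Quaternion.re_vectorProduct_mul_star α β γ x).symm
  refine ⟨⟨(star γ * β).im, ?_⟩, ⟨(γ * star β).im, ?_⟩⟩
  · rw [hδ_eq, Quaternion.vectorProduct, hβ, hγ, zero_smul, zero_smul, sub_zero, add_zero]
  · rw [hδ_eq, Quaternion.vectorProduct_eq_im_mul, hβ, hγ, zero_smul, zero_smul, sub_zero,
      add_zero]
end
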